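/- (Strict decrease along optimal predecessors, used in the termination argument for SP₁.) Let x ≠ v0 be reachable from v0. Then there exists a vertex v with E v x such that cost v + w v x = cost x and cost v < cost x; that is, since all edge weights are strictly positive, some in-neighbor of x realizing the optimal cost has cost strictly smaller than that of x. -/

import Mathlib

open scoped ENNReal

variable {V : Type*}

/-- `IsPath E v0 x p` means `p` is a finite sequence of vertices starting at `v0`,
ending at `x`, with consecutive vertices joined by edges of `E`. -/
def IsPath (E : V → V → Prop) (v0 x : V) (p : List V) : Prop :=
  p.Chain' E ∧ p.head? = some v0 ∧ p.getLast? = some x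

/-- The cost of a path: the sum of the weights of its consecutive edges. -/
noncomputable def pathCost (w : V → V → ℝ≥0∞) (p : List V) : ℝ≥0∞ :=
  ((p.zip p.tail).map fun q => w q.1 q.2).sum

/-- `cost E w v0 x` : the infimum of the costs of all paths from `v0` to `x`
(`∞` if `x` is unreachable from `v0`). -/
noncomputable def cost (E : V → V → Prop) (w : V → V → ℝ≥0∞) (v0 x : V) : ℝ≥0∞ :=
  ⨅ p : {p : List V // IsPath E v0 x p}, pathCost w p.1


/-! Every path to `x ≠ v0` ends with an edge `u → x`, so `cost x` is the infimum of
`cost u + w u x` over the in-neighbours `u` of `x` (the Bellman equation). This infimum is over a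
finite nonempty set, hence attained at some `v`; and `cost v < cost v + w v x = cost x` because
`cost x` is finite and `w v x > 0`. -/

namespace IsPath

variable {E : V → V → Prop} {v0 u x : V} {p q : List V}

lemma ne_nil (hp : IsPath E v0 x p) : p ≠ [] := by
  rintro rfl
  simp [IsPath] at hp

lemma concat (hq : IsPath E v0 u q) (hux : E u x) : IsPath E v0 x (q ++ [x]) := by
  obtain ⟨hchain : List.IsChain E q, hhead, hlast⟩ := hq
  refine ⟨List.isChain_append.2 ⟨hchain, List.isChain_singleton x, ?_⟩, ?_, by simp⟩
  · simp_all
  · rwa [List.head?_append_of_ne_nil _ (ne_nil ⟨hchain, hhead, hlast⟩)]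

lemma exists_eq_concat (hp : IsPath E v0 x p) (hx : x ≠ v0) :
    ∃ u q, E u x ∧ IsPath E v0 u q ∧ p = q ++ [x] := by
  obtain ⟨hchain : List.IsChain E p, hhead, hlast⟩ := hp
  obtain ⟨q, rfl⟩ : ∃ q, p = q ++ [x] := List.getLast?_eq_some_iff.1 hlast
  rcases q.eq_nil_or_concat' with rfl | ⟨q', u, rfl⟩
  · simp_all
  have hu : (q' ++ [u]).getLast? = some u := by simp
  rw [List.isChain_append] at hchain
  refine ⟨u, q' ++ [u], hchain.2.2 u hu x rfl, ⟨hchain.1, ?_, hu⟩, rfl⟩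
  rwa [List.head?_append_of_ne_nil _ (by simp)] at hhead

end IsPath

lemma pathCost_concat (w : V → V → ℝ≥0∞) (x : V) :
    ∀ {q : List V} {u : V}, q.getLast? = some u → pathCost w (q ++ [x]) = pathCost w q + w u x
  | [a], u, hu => by simp_all [pathCost]
  | a :: b :: l, u, hu => by
    have ih := pathCost_concat w x (q := b :: l) (by simpa using hu)
    simp only [List.cons_append, pathCost, List.tail_cons, List.zip_cons_cons, List.map_cons,
      List.sum_cons] at ih ⊢
    rw [ih, add_assoc]

lemma pathCost_lt_top {E : V → V → Prop} {w : V → V → ℝ≥0∞} (hfin : ∀ u v, E u v → w u v < ⊤) :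
    ∀ {p : List V}, p.IsChain E → pathCost w p < ⊤
  | [], _ | [_], _ => by simp [pathCost]
  | a :: b :: l, hp => by
    rw [List.isChain_cons_cons] at hp
    exact ENNReal.add_lt_top.2 ⟨hfin a b hp.1, pathCost_lt_top hfin hp.2⟩

section Cost

variable {E : V → V → Prop} {w : V → V → ℝ≥0∞} {v0 u x : V} {p : List V}

lemma cost_le_pathCost (hp : IsPath E v0 x p) : cost E w v0 x ≤ pathCost w p :=
  iInf_le (fun p : {p // IsPath E v0 x p} => pathCost w p.1) ⟨p, hp⟩

lemma cost_lt_top (hfin : ∀ u v, E u v → w u v < ⊤) (hreach : ∃ p, IsPath E v0 x p) :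
    cost E w v0 x < ⊤ :=
  let ⟨_, hp⟩ := hreach
  (cost_le_pathCost hp).trans_lt (pathCost_lt_top hfin hp.1)

lemma cost_le_cost_add (hux : E u x) : cost E w v0 x ≤ cost E w v0 u + w u x := by
  rw [cost.eq_1 E w v0 u, ENNReal.iInf_add]
  refine le_iInf fun ⟨q, hq⟩ => ?_
  rw [← pathCost_concat w x hq.2.2]
  exact cost_le_pathCost (hq.concat hux)

lemma cost_eq_iInf_pred (hx : x ≠ v0) :
    cost E w v0 x = ⨅ u : {u // E u x}, cost E w v0 u + w u x := by
  refine le_antisymm (le_iInf fun ⟨u, hux⟩ => cost_le_cost_add hux) (le_iInf fun ⟨p, hp⟩ => ?_)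
  obtain ⟨u, q, hux, hq, rfl⟩ := hp.exists_eq_concat hx
  calc ⨅ u : {u // E u x}, cost E w v0 u + w u x
      ≤ cost E w v0 u + w u x := iInf_le (fun u : {u // E u x} => cost E w v0 u + w u x) ⟨u, hux⟩
    _ ≤ pathCost w q + w u x := by gcongr; exact cost_le_pathCost hq
    _ = pathCost w (q ++ [x]) := (pathCost_concat w x hq.2.2).symm

lemma exists_pred_cost_add_eq [Finite V] (hx : x ≠ v0) (hreach : ∃ p, IsPath E v0 x p) :
    ∃ u, E u x ∧ cost E w v0 u + w u x = cost E w v0 x := by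
  obtain ⟨p, hp⟩ := hreach
  obtain ⟨u, -, hux, -⟩ := hp.exists_eq_concat hx
  have : Nonempty {u // E u x} := ⟨⟨u, hux⟩⟩
  obtain ⟨⟨v, hvx⟩, hv⟩ :=
    exists_eq_ciInf_of_finite (f := fun u : {u // E u x} => cost E w v0 u + w u x)
  exact ⟨v, hvx, hv.trans (cost_eq_iInf_pred hx).symm⟩

end Cost

/-- Strict decrease along optimal predecessors: if `x ≠ v0` is reachable from `v0`,
then some in-neighbor `v` of `x` realizes the optimal cost of `x` and satisfies
`cost v < cost x`. -/
theorem strict_decrease_pred [Fintype V] (E : V → V → Prop) (w : V → V → ℝ≥0∞)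
    (hpos : ∀ u v, E u v → 0 < w u v) (hfin : ∀ u v, E u v → w u v < ⊤)
    (v0 x : V) (hx : x ≠ v0) (hreach : ∃ p : List V, IsPath E v0 x p) :
    ∃ v : V, E v x ∧ cost E w v0 v + w v x = cost E w v0 x ∧
      cost E w v0 v < cost E w v0 x := by
  obtain ⟨v, hvx, hv⟩ := exists_pred_cost_add_eq (w := w) hx hreach
  have hv_top : cost E w v0 v ≠ ⊤ :=
    ne_top_of_le_ne_top (hv ▸ cost_lt_top hfin hreach).ne le_self_add
  exact ⟨v, hvx, hv, hv ▸ ENNReal.lt_add_right hv_top (hpos v x hvx).ne'⟩
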